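/- arXiv:2309.13491 — 4 statements merged into one kernel-verified Lean document; each statement's English description precedes it below -/
import Mathlib

section
/- Let G be a topological group and H a closed subgroup of G. If X is an H-space, then the H-orbit space X/H is homeomorphic to a retract of the H-orbit space (G ×_H X)/H; concretely, the map r : (G ×_H X)/H → (G ×_H X)/H sending the H-orbit of [g, x] to the H-orbit of [e, x] is a well-defined continuous retraction onto the image of the induced embedding X/H ↪ (G ×_H X)/H. -/
/-- The relation on `G × X` whose quotient is the twisted product `G ×_H X`. -/
def twRel {G : Type*} [Group G] (H : Subgroup G) (X : Type*) [MulAction H X] :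
    G × X → G × X → Prop :=
  fun p q => ∃ h : H, q.1 = p.1 * (h : G)⁻¹ ∧ q.2 = h • p.2

/-- The `G`-action on the twisted product `G ×_H X` by left translation in the
first coordinate: `g' • [g, x] = [g' g, x]`. -/
def gAct {G : Type*} [Group G] (H : Subgroup G) (X : Type*) [MulAction H X] (g' : G) :
    Quot (twRel H X) → Quot (twRel H X) :=
  Quot.map (fun p => (g' * p.1, p.2)) (by
    rintro ⟨g, x⟩ ⟨g₁, x₁⟩ ⟨h, h1, h2⟩
    exact ⟨h, by simp only at h1 h2 ⊢; rw [h1, mul_assoc], h2⟩)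

/-- The `H`-orbit relation on the `H`-space `X`. -/
def orbRelX {G : Type*} [Group G] (H : Subgroup G) (X : Type*) [MulAction H X] :
    X → X → Prop :=
  fun x y => ∃ h : H, y = h • x

/-- The `H`-orbit relation on the twisted product `G ×_H X`, where `H` acts by
restriction of the `G`-action `g' • [g, x] = [g' g, x]`. -/
def orbRelH {G : Type*} [Group G] (H : Subgroup G) (X : Type*) [MulAction H X] :
    Quot (twRel H X) → Quot (twRel H X) → Prop :=
  fun t t' => ∃ h : H, t' = gAct H X (h : G) t

/-! The projection `[g, x] ↦ x` descends to a continuous left inverse `(G ×_H X)/H → X/H` of the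
map induced by `x ↦ [e, x]`. A continuous map with a continuous left inverse is an embedding, and
composing the two maps the other way round gives the retraction. -/

namespace TwistedProduct

variable {G : Type*} [Group G] (H : Subgroup G) (X : Type*) [MulAction H X]

lemma mk_mul_eq_mk_smul (g : G) (h : H) (x : X) :
    Quot.mk (twRel H X) (g * h, x) = Quot.mk (twRel H X) (g, h • x) :=
  Quot.sound ⟨h, by simp, rfl⟩

/-- `[e, h • x] = [h, x] = h • [e, x]`. -/
lemma orbit_mk_one_smul (h : H) (x : X) :
    Quot.mk (orbRelH H X) (Quot.mk (twRel H X) ((1 : G), h • x))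
      = Quot.mk (orbRelH H X) (Quot.mk (twRel H X) ((1 : G), x)) := by
  rw [← mk_mul_eq_mk_smul, one_mul]
  exact (Quot.sound ⟨h, congrArg _ (Prod.ext (mul_one _).symm rfl)⟩).symm

def orbitIncl : Quot (orbRelX H X) → Quot (orbRelH H X) :=
  Quot.lift (fun x => Quot.mk (orbRelH H X) (Quot.mk (twRel H X) ((1 : G), x)))
    (by rintro x _ ⟨h, rfl⟩; exact (orbit_mk_one_smul H X h x).symm)

def orbitProj : Quot (orbRelH H X) → Quot (orbRelX H X) :=
  Quot.lift
    (Quot.lift (fun p : G × X => Quot.mk (orbRelX H X) p.2)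
      (by rintro p q ⟨h, -, hq⟩; exact Quot.sound ⟨h, hq⟩))
    (by rintro t _ ⟨h, rfl⟩; induction t using Quot.ind; rfl)

lemma orbitProj_leftInverse_orbitIncl :
    Function.LeftInverse (orbitProj H X) (orbitIncl H X) := by
  intro q
  induction q using Quot.ind
  rfl

variable [TopologicalSpace G] [TopologicalSpace X]

lemma continuous_orbitIncl : Continuous (orbitIncl H X) :=
  continuous_quot_lift _ <|
    (continuous_quot_mk.comp continuous_quot_mk).comp (continuous_const.prodMk continuous_id)

lemma continuous_orbitProj : Continuous (orbitProj H X) :=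
  continuous_quot_lift _ <| continuous_quot_lift _ <| continuous_quot_mk.comp continuous_snd

end TwistedProduct

open TwistedProduct in
theorem stmt6_general {G : Type*} [Group G] [TopologicalSpace G]
    (X : Type*) [TopologicalSpace X] (H : Subgroup G)
    [MulAction H X] :
    ∃ ιbar : Quot (orbRelX H X) → Quot (orbRelH H X),
      (∀ x : X, ιbar (Quot.mk (orbRelX H X) x)
          = Quot.mk (orbRelH H X) (Quot.mk (twRel H X) ((1 : G), x))) ∧
      Topology.IsEmbedding ιbar ∧
      ∃ r : Quot (orbRelH H X) → Quot (orbRelH H X),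
        (∀ p : G × X, r (Quot.mk (orbRelH H X) (Quot.mk (twRel H X) p))
            = Quot.mk (orbRelH H X) (Quot.mk (twRel H X) ((1 : G), p.2))) ∧
        Continuous r ∧
        Set.range r = Set.range ιbar ∧
        (∀ y ∈ Set.range ιbar, r y = y) := by
  have hli := orbitProj_leftInverse_orbitIncl H X
  refine ⟨orbitIncl H X, fun _ => rfl,
    hli.isEmbedding (continuous_orbitProj H X) (continuous_orbitIncl H X),
    orbitIncl H X ∘ orbitProj H X, fun _ => rfl,
    (continuous_orbitIncl H X).comp (continuous_orbitProj H X),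
    hli.surjective.range_comp _, ?_⟩
  rintro _ ⟨z, rfl⟩
  exact congrArg (orbitIncl H X) (hli z)

/-- For a closed subgroup `H ≤ G` and an `H`-space `X`, the orbit space
`X/H` embeds into `(G ×_H X)/H` via the map induced by `x ↦ [e, x]`, and the map
`r : (G ×_H X)/H → (G ×_H X)/H` sending the `H`-orbit of `[g, x]` to the `H`-orbit
of `[e, x]` is a well-defined continuous retraction onto the image of this
embedding; in particular `X/H` is homeomorphic to a retract of `(G ×_H X)/H`. -/
theorem stmt6 {G : Type*} [Group G] [TopologicalSpace G] [IsTopologicalGroup G]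
    (X : Type*) [TopologicalSpace X] (H : Subgroup G) (hH : IsClosed (H : Set G))
    [MulAction H X] [ContinuousSMul H X] :
    ∃ ιbar : Quot (orbRelX H X) → Quot (orbRelH H X),
      (∀ x : X, ιbar (Quot.mk (orbRelX H X) x)
          = Quot.mk (orbRelH H X) (Quot.mk (twRel H X) ((1 : G), x))) ∧
      Topology.IsEmbedding ιbar ∧
      ∃ r : Quot (orbRelH H X) → Quot (orbRelH H X),
        (∀ p : G × X, r (Quot.mk (orbRelH H X) (Quot.mk (twRel H X) p))
            = Quot.mk (orbRelH H X) (Quot.mk (twRel H X) ((1 : G), p.2))) ∧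
        Continuous r ∧
        Set.range r = Set.range ιbar ∧
        (∀ y ∈ Set.range ιbar, r y = y) :=
  stmt6_general X H
end

section
/- Let G be a topological group and K any closed subgroup of G. If S is a K-space, then the G-orbit space (G ×_K S)/G is homeomorphic to a retract of the K-orbit space (G ×_K S)/K. -/
/-- The `G`-orbit relation on the twisted product `G ×_H X`. -/
def orbRelG {G : Type*} [Group G] (H : Subgroup G) (X : Type*) [MulAction H X] :
    Quot (twRel H X) → Quot (twRel H X) → Prop :=
  fun t t' => ∃ g : G, t' = gAct H X g t

open Function Set

theorem exists_retract_homeomorph_of_leftInverse {X Y : Type*} [TopologicalSpace X]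
    [TopologicalSpace Y] {p : X → Y} {σ : Y → X} (hp : Continuous p) (hσ : Continuous σ)
    (h : LeftInverse p σ) :
    ∃ (A : Set X) (r : X → X), Continuous r ∧ range r = A ∧ (∀ a ∈ A, r a = a) ∧
      Nonempty (Y ≃ₜ A) :=
  ⟨range σ, σ ∘ p, hσ.comp hp, h.surjective.range_comp σ,
    by rintro _ ⟨y, rfl⟩; simp [h y],
    ⟨(Topology.IsEmbedding.of_leftInverse h hp hσ).toHomeomorph⟩⟩

section TwistedProduct

variable {G : Type*} [Group G] {K : Subgroup G} {S : Type*} [MulAction K S]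

def twistedOrbitProj : Quot (orbRelH K S) → Quot (orbRelG K S) :=
  Quot.lift (Quot.mk _) (by rintro a b ⟨k, rfl⟩; exact Quot.sound ⟨k, rfl⟩)

lemma twistedOrbit_mk_one_smul (k : K) (s : S) :
    Quot.mk (orbRelH K S) (Quot.mk (twRel K S) (1, s)) =
      Quot.mk (orbRelH K S) (Quot.mk (twRel K S) (1, k • s)) :=
  Quot.sound ⟨k, (Quot.sound ⟨k, by simp, rfl⟩).symm⟩

def twistedOrbitSection : Quot (orbRelG K S) → Quot (orbRelH K S) :=
  Quot.lift
    (Quot.lift (fun p => Quot.mk (orbRelH K S) (Quot.mk (twRel K S) (1, p.2)))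
      (by rintro ⟨g, s⟩ ⟨g', s'⟩ ⟨k, -, rfl⟩; exact twistedOrbit_mk_one_smul k s))
    (by rintro a b ⟨g, rfl⟩; induction a using Quot.ind; rfl)

lemma twistedOrbitProj_leftInverse_twistedOrbitSection :
    LeftInverse (twistedOrbitProj (K := K) (S := S)) twistedOrbitSection := by
  rintro ⟨⟨g, s⟩⟩
  exact Quot.sound ⟨g, by simp [gAct, Quot.map]⟩

variable [TopologicalSpace G] [TopologicalSpace S]

lemma continuous_twistedOrbitProj : Continuous (twistedOrbitProj (K := K) (S := S)) :=
  continuous_quot_lift _ continuous_quot_mk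

lemma continuous_twistedOrbitSection : Continuous (twistedOrbitSection (K := K) (S := S)) :=
  continuous_quot_lift _ <| continuous_quot_lift _ <|
    (continuous_quot_mk.comp continuous_quot_mk).comp (continuous_const.prodMk continuous_snd)

end TwistedProduct

theorem stmt8_general {G : Type*} [Group G] [TopologicalSpace G]
    (S : Type*) [TopologicalSpace S] (K : Subgroup G)
    [MulAction K S] :
    ∃ (A : Set (Quot (orbRelH K S))) (r : Quot (orbRelH K S) → Quot (orbRelH K S)),
      Continuous r ∧ Set.range r = A ∧ (∀ a ∈ A, r a = a) ∧
      Nonempty (Quot (orbRelG K S) ≃ₜ A) :=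
  exists_retract_homeomorph_of_leftInverse continuous_twistedOrbitProj
    continuous_twistedOrbitSection twistedOrbitProj_leftInverse_twistedOrbitSection

/-- For a closed subgroup `K ≤ G` and a `K`-space `S`, the `G`-orbit
space `(G ×_K S)/G` is homeomorphic to a retract of the `K`-orbit space
`(G ×_K S)/K`. -/
theorem stmt8 {G : Type*} [Group G] [TopologicalSpace G] [IsTopologicalGroup G]
    (S : Type*) [TopologicalSpace S] (K : Subgroup G) (hK : IsClosed (K : Set G))
    [MulAction K S] [ContinuousSMul K S] :
    ∃ (A : Set (Quot (orbRelH K S))) (r : Quot (orbRelH K S) → Quot (orbRelH K S)),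
      Continuous r ∧ Set.range r = A ∧ (∀ a ∈ A, r a = a) ∧
      Nonempty (Quot (orbRelG K S) ≃ₜ A) :=
  stmt8_general S K
end

section
/- Let H be a compact subgroup of a topological group G, X a G-space, and S ⊆ X a global H-slice of X (i.e., S = f⁻¹(eH) for some G-map f : X → G/H with G(S) = X). Then the map ξ : G ×_H S → X defined by ξ([g, s]) = g•s is a G-equivariant homeomorphism. -/
/-!
The inverse of `[g, s] ↦ g • s` sends `x` to `[g, g⁻¹ • x]` for any `g` with `gH = f x`; the
choice of `g` is immaterial because two choices differ by an element of `H`. Its continuity is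
checked on the pullback `{(g, x) | gH = f x}` of `G → G/H` along `f`: there it is visibly
continuous, and the projection of this pullback onto `X` is an open surjection because
`G → G/H` is one.
-/

/-- The relation on `G × S` (where `S = f⁻¹(eH)` is a global `H`-slice, viewed as a
subtype of `X`) whose quotient is the twisted product `G ×_H S`:
`(g, s) ~ (g h⁻¹, h • s)` for `h ∈ H`. -/
def twRelSlice {G X : Type*} [Group G] [TopologicalSpace G] [TopologicalSpace X]
    [MulAction G X] (H : Subgroup G) (f : X → G ⧸ H) :
    G × {x : X // f x = ((1 : G) : G ⧸ H)} →
    G × {x : X // f x = ((1 : G) : G ⧸ H)} → Prop :=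
  fun p q => ∃ h : H, q.1 = p.1 * (h : G)⁻¹ ∧ (q.2 : X) = (h : G) • (p.2 : X)

open Function

section Pullback

variable {A B Y : Type*} [TopologicalSpace A] [TopologicalSpace B] [TopologicalSpace Y]
  {p : A → B} {f : Y → B}

theorem IsOpenMap.pullback_snd (hp : IsOpenMap p) (hf : Continuous f) :
    IsOpenMap (Pullback.snd : p.Pullback f → Y) := by
  intro O hO
  obtain ⟨U, hU, rfl⟩ := isOpen_induced_iff.mp hO
  rw [isOpen_iff_forall_mem_open]
  rintro _ ⟨⟨⟨a, y⟩, hay⟩, hU_mem, rfl⟩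
  obtain ⟨V, W, hV, hW, haV, hyW, hVW⟩ := isOpen_prod_iff.mp hU a y hU_mem
  refine ⟨W ∩ f ⁻¹' (p '' V), ?_, hW.inter (hf.isOpen_preimage _ (hp V hV)),
    hyW, a, haV, hay⟩
  rintro y' ⟨hy'W, a', ha'V, ha'y'⟩
  exact ⟨⟨(a', y'), ha'y'⟩, hVW ⟨ha'V, hy'W⟩, rfl⟩

theorem IsOpenQuotientMap.pullback_snd (hp : IsOpenQuotientMap p) (hf : Continuous f) :
    IsOpenQuotientMap (Pullback.snd : p.Pullback f → Y) where
  surjective y := by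
    obtain ⟨a, ha⟩ := hp.surjective (f y)
    exact ⟨⟨(a, y), ha⟩, rfl⟩
  continuous := continuous_snd.comp continuous_subtype_val
  isOpenMap := hp.isOpenMap.pullback_snd hf

end Pullback

namespace GlobalSlice

theorem inv_smul_mem_slice {G X : Type*} [Group G] [MulAction G X] {H : Subgroup G}
    {f : X → G ⧸ H} (hequiv : ∀ (g : G) (x : X), f (g • x) = g • f x) {g : G} {x : X}
    (hx : f x = g) : f (g⁻¹ • x) = ((1 : G) : G ⧸ H) := by
  rw [hequiv, hx, MulAction.Quotient.smul_coe, smul_eq_mul, inv_mul_cancel]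

variable {G X : Type*} [Group G] [TopologicalSpace G] [TopologicalSpace X] [MulAction G X]
  {H : Subgroup G} {f : X → G ⧸ H}

theorem smul_eq_of_twRelSlice {p q} (hpq : twRelSlice H f p q) :
    p.1 • (p.2 : X) = q.1 • (q.2 : X) := by
  obtain ⟨h, hq₁, hq₂⟩ := hpq
  rw [hq₁, hq₂, smul_smul, inv_mul_cancel_right]

def twistedSmul : Quot (twRelSlice H f) → X :=
  Quot.lift (fun p => p.1 • (p.2 : X)) fun _ _ => smul_eq_of_twRelSlice

theorem continuous_twistedSmul [ContinuousSMul G X] :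
    Continuous (twistedSmul : Quot (twRelSlice H f) → X) :=
  continuous_quot_lift _ (continuous_fst.smul (continuous_subtype_val.comp continuous_snd))

variable (hequiv : ∀ (g : G) (x : X), f (g • x) = g • f x)
include hequiv

noncomputable def untwist (x : X) : Quot (twRelSlice H f) :=
  Quot.mk _ ((f x).out, ⟨(f x).out⁻¹ • x, inv_smul_mem_slice hequiv (f x).out_eq'.symm⟩)

theorem untwist_eq {g : G} {x : X} (hx : f x = g) :
    untwist hequiv x = Quot.mk _ (g, ⟨g⁻¹ • x, inv_smul_mem_slice hequiv hx⟩) := by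
  apply Quot.sound
  have hmem : g⁻¹ * (f x).out ∈ H := QuotientGroup.eq.mp (by rw [QuotientGroup.out_eq', hx])
  refine ⟨⟨g⁻¹ * (f x).out, hmem⟩, ?_, ?_⟩
  · simp
  · simp [smul_smul, mul_assoc]

theorem twistedSmul_untwist (x : X) : twistedSmul (untwist hequiv x) = x := by
  simp [twistedSmul, untwist, smul_smul]

theorem untwist_twistedSmul (q : Quot (twRelSlice H f)) : untwist hequiv (twistedSmul q) = q := by
  induction q using Quot.ind with
  | mk p =>
    obtain ⟨g, s, hs⟩ := p
    have hgs : f (g • s) = g := by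
      rw [hequiv, hs, MulAction.Quotient.smul_coe, smul_eq_mul, mul_one]
    change untwist hequiv (g • s) = _
    rw [untwist_eq hequiv hgs]
    simp only [inv_smul_smul]

theorem continuous_untwist [IsTopologicalGroup G] [ContinuousSMul G X] (hf : Continuous f) :
    Continuous (untwist hequiv) := by
  have hπ := (QuotientGroup.isOpenQuotientMap_mk (N := H)).pullback_snd hf
  rw [← hπ.continuous_comp_iff]
  have hcomp : untwist hequiv ∘ Pullback.snd =
      fun w : (QuotientGroup.mk : G → G ⧸ H).Pullback f =>
        Quot.mk _ (w.fst, ⟨w.fst⁻¹ • w.snd, inv_smul_mem_slice hequiv w.2.symm⟩) :=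
    funext fun w => untwist_eq hequiv w.2.symm
  have hfst : Continuous (Pullback.fst : (QuotientGroup.mk : G → G ⧸ H).Pullback f → G) :=
    continuous_fst.comp continuous_subtype_val
  have hsnd : Continuous (Pullback.snd : (QuotientGroup.mk : G → G ⧸ H).Pullback f → X) :=
    continuous_snd.comp continuous_subtype_val
  rw [hcomp]
  exact continuous_quot_mk.comp (hfst.prodMk ((hfst.inv.smul hsnd).subtype_mk _))

noncomputable def twistedSmulHomeomorph [IsTopologicalGroup G] [ContinuousSMul G X]
    (hf : Continuous f) : Quot (twRelSlice H f) ≃ₜ X where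
  toFun := twistedSmul
  invFun := untwist hequiv
  left_inv := untwist_twistedSmul hequiv
  right_inv := twistedSmul_untwist hequiv
  continuous_toFun := continuous_twistedSmul
  continuous_invFun := continuous_untwist hequiv hf

end GlobalSlice

theorem stmt12_general {G X : Type*} [Group G] [TopologicalSpace G] [IsTopologicalGroup G]
    [TopologicalSpace X] [MulAction G X] [ContinuousSMul G X]
    (H : Subgroup G)
    (f : X → G ⧸ H) (hf : Continuous f)
    (hequiv : ∀ (g : G) (x : X), f (g • x) = g • f x) :
    ∃ ξ : Quot (twRelSlice H f) ≃ₜ X,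
      (∀ p, ξ (Quot.mk (twRelSlice H f) p) = p.1 • (p.2 : X)) ∧
      (∀ (g : G) (p), ξ (Quot.mk (twRelSlice H f) (g * p.1, p.2))
          = g • ξ (Quot.mk (twRelSlice H f) p)) :=
  ⟨GlobalSlice.twistedSmulHomeomorph hequiv hf, fun _ => rfl, fun g p => mul_smul g p.1 (p.2 : X)⟩

/-- Let `H` be a compact subgroup of `G`, `X` a `G`-space and
`S = f⁻¹(eH)` a global `H`-slice of `X`, where `f : X → G/H` is a `G`-map. Then
`ξ : G ×_H S → X`, `ξ [g, s] = g • s`, is a `G`-equivariant homeomorphism. -/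
theorem stmt12 {G X : Type*} [Group G] [TopologicalSpace G] [IsTopologicalGroup G]
    [TopologicalSpace X] [MulAction G X] [ContinuousSMul G X]
    (H : Subgroup G) (hHcpt : IsCompact (H : Set G))
    (f : X → G ⧸ H) (hf : Continuous f)
    (hequiv : ∀ (g : G) (x : X), f (g • x) = g • f x) :
    ∃ ξ : Quot (twRelSlice H f) ≃ₜ X,
      (∀ p, ξ (Quot.mk (twRelSlice H f) p) = p.1 • (p.2 : X)) ∧
      (∀ (g : G) (p), ξ (Quot.mk (twRelSlice H f) (g * p.1, p.2))
          = g • ξ (Quot.mk (twRelSlice H f) p)) :=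
  stmt12_general H f hf hequiv
end

section
/- Let X be a topological space that is the union of a family of open subsets each of which is an absolute neighborhood extensor for metrizable spaces (ANE). Then X is an ANE for metrizable spaces (Hanner's open union theorem). -/
universe u v

/-- `Y` is an absolute neighborhood extensor for the class of metrizable spaces:
every continuous map from a closed subset of a metrizable space into `Y` extends
continuously over an open neighborhood of that subset. -/
def IsANE (Y : Type v) [TopologicalSpace Y] : Prop :=
  ∀ (Z : Type u) [TopologicalSpace Z] [TopologicalSpace.MetrizableSpace Z]
    (A : Set Z), IsClosed A → ∀ f : A → Y, Continuous f →
    ∃ U : Set Z, IsOpen U ∧ ∃ hAU : A ⊆ U,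
      ∃ F : U → Y, Continuous F ∧ ∀ a : A, F ⟨(a : Z), hAU a.2⟩ = f a

/-!
Let `f` map a closed set `A` of a metric space `Z` into `X`. Pulling back the cover `U` and
refining it as in Rudin's proof of paracompactness, `A` is covered by closed sets `C n`, each of
which is covered by a family `T n i` of pairwise disjoint open sets with `f (A ∩ T n i) ⊆ U i`.
Over such a disjoint family a map extends one piece at a time, by the ANE property of each `U i`.

The extension is then built over neighbourhoods of `C 0`, `C 0 ∪ C 1`, … in turn. At each stage
the previous map is kept on an open set `P` around a closed neighbourhood `K` of what is already
covered, and a fresh extension is used outside `P`; the two are matched along the frontier of `P`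
near `C n`, where the previous map still sends `T n i` into `U i`. The maps agree on the increasing
closed sets `K`, so their limit is continuous on the union of the interiors, which contains `A`.
-/

open Function Set TopologicalSpace

section Refinement

open Metric

variable {Z : Type*} [PseudoMetricSpace Z] {ι : Type*}

theorem exists_open_refinement_pairwise_disjoint_nat {V : ι → Set Z} (hV : ∀ i, IsOpen (V i)) :
    ∃ R : ℕ → ι → Set Z, (∀ n i, IsOpen (R n i)) ∧ (∀ n i, R n i ⊆ V i) ∧
      (∀ n, Pairwise (Disjoint on (R n))) ∧ ⋃ n, ⋃ i, R n i = ⋃ i, V i := by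
  obtain ⟨_, _⟩ := exists_wellFoundedLT ι
  set r : ℕ → ℝ := fun n => 1 / (n + 1)
  set R : ℕ → ι → Set Z := fun n i =>
    ⋃ x ∈ {x | (∀ j < i, x ∉ V j) ∧ ball x (2 * r n) ⊆ V i}, ball x (r n)
  have hr : ∀ n, 0 < r n := fun n => Nat.one_div_pos_of_nat
  have hRV : ∀ n i, R n i ⊆ V i := by
    refine fun n i y hy => ?_
    obtain ⟨x, ⟨-, hx⟩, hxy⟩ := mem_iUnion₂.1 hy
    exact hx (ball_subset_ball (by linarith [hr n]) hxy)
  have hdisj : ∀ n i j, i < j → Disjoint (R n i) (R n j) := by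
    refine fun n i j hij => disjoint_left.2 fun y hyi hyj => ?_
    obtain ⟨x, ⟨-, hx⟩, hxy⟩ := mem_iUnion₂.1 hyi
    obtain ⟨x', ⟨hx', -⟩, hx'y⟩ := mem_iUnion₂.1 hyj
    -- the centre `x'` of the second ball would lie in `V i`, against the minimality of `j`
    refine hx' i hij (hx ?_)
    rw [mem_ball] at hxy hx'y ⊢
    linarith [dist_triangle x' y x, dist_comm x' y]
  refine ⟨R, fun n i => isOpen_biUnion fun _ _ => isOpen_ball, hRV,
    fun n i j hij => hij.lt_or_gt.elim (hdisj n i j) fun h => (hdisj n j i h).symm, ?_⟩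
  refine (iUnion_subset fun n => iUnion_mono (hRV n)).antisymm fun x hx => ?_
  have hne : {i | x ∈ V i}.Nonempty := mem_iUnion.1 hx
  set i₀ := wellFounded_lt.min _ hne
  obtain ⟨ε, hε, hball⟩ := isOpen_iff.1 (hV i₀) x (wellFounded_lt.min_mem _ hne)
  obtain ⟨n, hn⟩ := exists_nat_one_div_lt (half_pos hε)
  refine mem_iUnion₂.2 ⟨n, i₀, mem_iUnion₂.2 ⟨x, ⟨fun j hj hxj => ?_, ?_⟩, mem_ball_self (hr n)⟩⟩
  · exact wellFounded_lt.not_lt_min {i | x ∈ V i} hxj hj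
  · exact (ball_subset_ball (by linarith)).trans hball

theorem IsClosed.exists_closed_cover_subordinate_pairwise_disjoint {A : Set Z} (hA : IsClosed A)
    {V : ι → Set Z} (hV : ∀ i, IsOpen (V i)) (hAV : A ⊆ ⋃ i, V i) :
    ∃ (C : ℕ → Set Z) (T : ℕ → ι → Set Z), (∀ n, IsClosed (C n)) ∧ (∀ n, C n ⊆ A) ∧
      A ⊆ ⋃ n, C n ∧ (∀ n i, IsOpen (T n i)) ∧ (∀ n i, T n i ⊆ V i) ∧
      (∀ n, Pairwise (Disjoint on T n)) ∧ ∀ n, C n ⊆ ⋃ i, T n i := by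
  obtain ⟨R, hRo, hRV, hRd, hRcov⟩ := exists_open_refinement_pairwise_disjoint_nat hV
  choose F hFc hFR hFcov _ using fun n => (isOpen_iUnion (hRo n)).exists_iUnion_isClosed
  refine ⟨fun m => A ∩ F m.unpair.1 m.unpair.2, fun m => R m.unpair.1,
    fun m => hA.inter (hFc _ _), fun m => inter_subset_left, fun a ha => ?_,
    fun m => hRo _, fun m => hRV _, fun m => hRd _, fun m => inter_subset_right.trans (hFR _ _)⟩
  obtain ⟨n, hn⟩ := mem_iUnion.1 (hRcov.symm ▸ hAV ha)
  obtain ⟨k, hk⟩ := mem_iUnion.1 ((hFcov n).symm ▸ hn : a ∈ ⋃ k, F n k)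
  exact mem_iUnion.2 ⟨Nat.pair n k, ha, by rwa [Nat.unpair_pair]⟩

end Refinement

variable {X : Type v} [TopologicalSpace X]

theorem IsANE.exists_continuousOn_extension {Y : Set X} (hY : IsANE.{u} Y) {Z : Type u}
    [TopologicalSpace Z] [MetrizableSpace Z] {E : Set Z} (hE : IsClosed E) {φ : Z → X}
    (hφ : ContinuousOn φ E) (hφY : MapsTo φ E Y) :
    ∃ V, IsOpen V ∧ E ⊆ V ∧ ∃ ψ : Z → X, ContinuousOn ψ V ∧ EqOn ψ φ E := by
  classical
  obtain ⟨V, hV, hEV, G, hG, hGφ⟩ := hY Z E hE _ (hφ.mapsToRestrict hφY)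
  refine ⟨V, hV, hEV, fun z => if h : z ∈ V then G ⟨z, h⟩ else φ z, ?_, fun z hz => ?_⟩
  · rw [continuousOn_iff_continuous_domRestrict]
    convert continuous_subtype_val.comp hG using 1
    exact funext fun p => dif_pos p.2
  · simp only [dif_pos (hEV hz), hGφ ⟨z, hz⟩, MapsTo.val_restrict_apply]

theorem isANE_of_exists_continuousOn_extension
    (h : ∀ (Z : Type u) [TopologicalSpace Z] [MetrizableSpace Z] (A : Set Z), IsClosed A →
      ∀ f : Z → X, ContinuousOn f A →
        ∃ V, IsOpen V ∧ A ⊆ V ∧ ∃ F : Z → X, ContinuousOn F V ∧ EqOn F f A) :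
    IsANE.{u} X := by
  classical
  intro Z _ _ A hA f hf
  rcases isEmpty_or_nonempty X with hX | hX
  · exact ⟨∅, isOpen_empty, fun a ha => isEmptyElim (f ⟨a, ha⟩), fun p => p.2.elim,
      continuous_of_discreteTopology, fun a => isEmptyElim (f a)⟩
  let g : Z → X := fun z => if h : z ∈ A then f ⟨z, h⟩ else Classical.arbitrary X
  have hg : ContinuousOn g A := by
    rw [continuousOn_iff_continuous_domRestrict]
    convert hf using 1
    exact funext fun a => dif_pos a.2
  obtain ⟨V, hV, hAV, F, hF, hFg⟩ := h Z A hA g hg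
  exact ⟨V, hV, hAV, V.domRestrict F, continuousOn_iff_continuous_domRestrict.1 hF,
    fun a => (hFg a.2).trans (dif_pos a.2)⟩

theorem IsClosed.inter_of_pairwise_disjoint {Z : Type*} [TopologicalSpace Z] {ι : Type*}
    {E : Set Z} (hE : IsClosed E) {T : ι → Set Z} (hT : ∀ i, IsOpen (T i))
    (hTd : Pairwise (Disjoint on T)) (hET : E ⊆ ⋃ i, T i) (i : ι) : IsClosed (E ∩ T i) := by
  convert hE.inter (isOpen_biUnion fun j (_ : j ≠ i) => hT j).isClosed_compl using 1
  ext z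
  simp only [mem_inter_iff, mem_compl_iff, mem_iUnion₂, not_exists, and_congr_right_iff]
  refine fun hz => ⟨fun hzi j hji hzj => disjoint_left.1 (hTd hji) hzj hzi, fun h => ?_⟩
  obtain ⟨j, hj⟩ := mem_iUnion.1 (hET hz)
  by_cases hji : j = i
  · exact hji ▸ hj
  · exact absurd hj (h j hji)

theorem exists_continuousOn_extension_of_pairwise_disjoint {ι : Type*} {U : ι → Set X}
    (hU : ∀ i, IsANE.{u} (U i)) {Z : Type u} [TopologicalSpace Z] [MetrizableSpace Z]
    {E : Set Z} (hE : IsClosed E) {T : ι → Set Z} (hT : ∀ i, IsOpen (T i))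
    (hTd : Pairwise (Disjoint on T)) (hET : E ⊆ ⋃ i, T i) {φ : Z → X} (hφ : ContinuousOn φ E)
    (hφU : ∀ i, MapsTo φ (E ∩ T i) (U i)) :
    ∃ Ω, IsOpen Ω ∧ E ⊆ Ω ∧ ∃ ψ : Z → X, ContinuousOn ψ Ω ∧ EqOn ψ φ E := by
  classical
  choose V hV hEV ψ hψ hψφ using fun i => (hU i).exists_continuousOn_extension
    (hE.inter_of_pairwise_disjoint hT hTd hET i) (hφ.mono inter_subset_left) (hφU i)
  let Ψ : Z → X := fun z => if h : ∃ i, z ∈ T i then ψ h.choose z else φ z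
  have hΨ : ∀ i, EqOn Ψ (ψ i) (T i) := fun i z hz => by
    have h : ∃ i, z ∈ T i := ⟨i, hz⟩
    simp only [Ψ, dif_pos h]
    rw [hTd.eq (not_disjoint_iff.2 ⟨z, h.choose_spec, hz⟩)]
  refine ⟨⋃ i, T i ∩ V i, isOpen_iUnion fun i => (hT i).inter (hV i), fun z hz => ?_, Ψ, ?_,
    fun z hz => ?_⟩
  · obtain ⟨i, hi⟩ := mem_iUnion.1 (hET hz)
    exact mem_iUnion.2 ⟨i, hi, hEV i ⟨hz, hi⟩⟩
  · refine continuousOn_of_locally_continuousOn fun z hz => ?_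
    obtain ⟨i, hzT, hzV⟩ := mem_iUnion.1 hz
    exact ⟨T i ∩ V i, (hT i).inter (hV i), ⟨hzT, hzV⟩,
      ((hψ i).mono fun y hy => hy.2.2).congr fun y hy => hΨ i hy.2.1⟩
  · obtain ⟨i, hi⟩ := mem_iUnion.1 (hET hz)
    exact (hΨ i hi).trans (hψφ i ⟨hz, hi⟩)

section Step

variable {ι : Type*} {U : ι → Set X} {Z : Type u} [TopologicalSpace Z] [MetrizableSpace Z]
  {A : Set Z} {f : Z → X} {T : ι → Set Z} {N : Set Z} {F : Z → X}

theorem exists_extension_near_frontier (hU : ∀ i, IsOpen (U i)) (hANE : ∀ i, IsANE.{u} (U i))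
    (hf : ContinuousOn f A) (hT : ∀ i, IsOpen (T i)) (hTd : Pairwise (Disjoint on T))
    (hfT : ∀ i, MapsTo f (A ∩ T i) (U i)) (hN : IsOpen N) (hF : ContinuousOn F N)
    (hFf : EqOn F f (A ∩ N)) {P : Set Z} (hP : IsOpen P) (hPN : closure P ⊆ N) {D : Set Z}
    (hD : IsClosed D) (hDA : D ⊆ A) (hDT : D ⊆ ⋃ i, T i) :
    ∃ W, IsOpen W ∧ D ∩ frontier P ⊆ W ∧ ∃ Ω, IsOpen Ω ∧ D \ P ⊆ Ω ∧ ∃ ψ : Z → X,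
      ContinuousOn ψ Ω ∧ EqOn ψ F (frontier P ∩ W) ∧ EqOn ψ f (D \ P) := by
  classical
  -- near `D ∩ frontier P` the map `F` still sends each `T i` into `U i`
  set R := ⋃ i, T i ∩ (N ∩ F ⁻¹' U i)
  have hR : IsOpen R := isOpen_iUnion fun i => (hT i).inter (hF.isOpen_inter_preimage hN (hU i))
  have hDR : D ∩ frontier P ⊆ R := by
    rintro z ⟨hzD, hzP⟩
    have hzN : z ∈ N := hPN (frontier_subset_closure hzP)
    obtain ⟨i, hi⟩ := mem_iUnion.1 (hDT hzD)
    refine mem_iUnion.2 ⟨i, hi, hzN, ?_⟩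
    rw [mem_preimage, hFf ⟨hDA hzD, hzN⟩]
    exact hfT i ⟨hDA hzD, hi⟩
  obtain ⟨W, hW, hDW, hWR⟩ := normal_exists_closure_subset (hD.inter isClosed_frontier) hR hDR
  set K₀ := frontier P ∩ closure W
  have hK₀N : K₀ ⊆ N := fun z hz => hPN (frontier_subset_closure hz.1)
  set φ : Z → X := K₀.piecewise F f
  have hφF : EqOn φ F K₀ := piecewise_eqOn _ _ _
  have hφf : EqOn φ f (D \ P) := fun z hz => by
    by_cases hzK : z ∈ K₀
    · rw [hφF hzK, hFf ⟨hDA hz.1, hK₀N hzK⟩]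
    · exact piecewise_eq_of_notMem _ _ _ hzK
  have hφ : ContinuousOn φ (K₀ ∪ D \ P) :=
    ((hF.mono hK₀N).congr hφF).union_of_isClosed
      ((hf.mono fun z hz => hDA hz.1).congr hφf)
      (isClosed_frontier.inter isClosed_closure) (hD.sdiff hP)
  have hφU : ∀ i, MapsTo φ ((K₀ ∪ D \ P) ∩ T i) (U i) := by
    rintro i z ⟨hz | hz, hzi⟩
    · obtain ⟨j, hzj, -, hFz⟩ := mem_iUnion.1 (hWR hz.2)
      rw [hφF hz, hTd.eq (not_disjoint_iff.2 ⟨z, hzi, hzj⟩)]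
      exact hFz
    · rw [hφf hz]
      exact hfT i ⟨hDA hz.1, hzi⟩
  have hET : K₀ ∪ D \ P ⊆ ⋃ i, T i := by
    rintro z (hz | hz)
    · exact iUnion_mono (fun i => inter_subset_left) (hWR hz.2)
    · exact hDT hz.1
  obtain ⟨Ω, hΩ, hEΩ, ψ, hψ, hψφ⟩ := exists_continuousOn_extension_of_pairwise_disjoint hANE
    ((isClosed_frontier.inter isClosed_closure).union (hD.sdiff hP)) hT hTd hET hφ hφU
  exact ⟨W, hW, hDW, Ω, hΩ, fun z hz => hEΩ (Or.inr hz), ψ, hψ,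
    fun z hz => (hψφ (Or.inl ⟨hz.1, subset_closure hz.2⟩)).trans (hφF ⟨hz.1, subset_closure hz.2⟩),
    fun z hz => (hψφ (Or.inr hz)).trans (hφf hz)⟩

theorem exists_extension_step (hU : ∀ i, IsOpen (U i)) (hANE : ∀ i, IsANE.{u} (U i))
    (hA : IsClosed A) (hf : ContinuousOn f A) (hT : ∀ i, IsOpen (T i))
    (hTd : Pairwise (Disjoint on T)) (hfT : ∀ i, MapsTo f (A ∩ T i) (U i)) (hN : IsOpen N)
    (hF : ContinuousOn F N) (hFf : EqOn F f (A ∩ N)) {K : Set Z} (hK : IsClosed K)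
    (hKN : K ⊆ N) {C : Set Z} (hC : IsClosed C) (hCA : C ⊆ A) (hCT : C ⊆ ⋃ i, T i) :
    ∃ N', IsOpen N' ∧ K ∪ C ⊆ N' ∧
      ∃ F' : Z → X, ContinuousOn F' N' ∧ EqOn F' f (A ∩ N') ∧ EqOn F' F K := by
  classical
  obtain ⟨P, hP, hKP, hPN⟩ := normal_exists_closure_subset hK hN hKN
  obtain ⟨O, hO, hCO, hOT⟩ := normal_exists_closure_subset hC (isOpen_iUnion hT) hCT
  obtain ⟨W, hW, hDW, Ω, hΩ, hDΩ, ψ, hψ, hψF, hψf⟩ := exists_extension_near_frontier hU hANE hf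
    hT hTd hfT hN hF hFf hP hPN (hA.inter isClosed_closure) inter_subset_left
    (inter_subset_right.trans hOT)
  -- `F` is kept on `P` and `ψ` is used off `P`: there `ψ` is defined on `Ω`, equals `f` on
  -- `A ∩ O ⊆ D`, and equals `F` on the part `frontier P ∩ W` of the frontier that `N'` meets
  set N' := P ∪ (Ω ∩ O ∩ ((closure P)ᶜ ∪ (N ∩ W)))
  have hN'P : ∀ z ∈ N', z ∉ P → z ∈ Ω ∧ z ∈ O ∧ (z ∈ closure P → z ∈ N ∧ z ∈ W) := by
    rintro z (hz | ⟨⟨hzΩ, hzO⟩, hz⟩) hzP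
    · exact absurd hz hzP
    · exact ⟨hzΩ, hzO, fun hzc => hz.resolve_left (not_not_intro hzc)⟩
  have hN'open : IsOpen N' :=
    hP.union ((hΩ.inter hO).inter (isClosed_closure.isOpen_compl.union (hN.inter hW)))
  refine ⟨N', hN'open, ?_, P.piecewise F ψ, ?_, fun z hz => ?_, fun z hz => ?_⟩
  · rintro z (hz | hz)
    · exact Or.inl (hKP hz)
    by_cases hzP : z ∈ P
    · exact Or.inl hzP
    have hzD : z ∈ (A ∩ closure O) \ P := ⟨⟨hCA hz, subset_closure (hCO hz)⟩, hzP⟩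
    refine Or.inr ⟨⟨hDΩ hzD, hCO hz⟩, ?_⟩
    by_cases hzc : z ∈ closure P
    · exact Or.inr ⟨hPN hzc, hDW ⟨hzD.1, hP.frontier_eq ▸ ⟨hzc, hzP⟩⟩⟩
    · exact Or.inl hzc
  · refine ContinuousOn.piecewise (fun z hz => ?_) (hF.mono fun z hz => ?_) (hψ.mono fun z hz => ?_)
    · rw [hP.frontier_eq] at hz
      obtain ⟨-, -, hzNW⟩ := hN'P z hz.1 hz.2.2
      exact (hψF ⟨hP.frontier_eq ▸ hz.2, (hzNW hz.2.1).2⟩).symm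
    · by_cases hzP : z ∈ P
      · exact subset_closure.trans hPN hzP
      · exact ((hN'P z hz.1 hzP).2.2 hz.2).1
    · rw [closure_compl, hP.interior_eq] at hz
      exact (hN'P z hz.1 hz.2).1
  · by_cases hzP : z ∈ P
    · rw [piecewise_eq_of_mem _ _ _ hzP]
      exact hFf ⟨hz.1, subset_closure.trans hPN hzP⟩
    · rw [piecewise_eq_of_notMem _ _ _ hzP]
      exact hψf ⟨⟨hz.1, subset_closure (hN'P z hz.2 hzP).2.1⟩, hzP⟩
  · exact piecewise_eq_of_mem _ _ _ (hKP hz)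

end Step

theorem exists_continuousOn_iUnion_interior {Z : Type*} [TopologicalSpace Z] {K : ℕ → Set Z}
    (hK : Monotone K) {F : ℕ → Z → X} (hF : ∀ n, ContinuousOn (F n) (K n))
    (hFK : ∀ n, EqOn (F (n + 1)) (F n) (K n)) :
    ∃ G : Z → X, ContinuousOn G (⋃ n, interior (K n)) ∧ ∀ n, EqOn G (F n) (K n) := by
  classical
  have hcompat : ∀ m n, m ≤ n → EqOn (F n) (F m) (K m) := by
    intro m n hmn
    induction n, hmn using Nat.le_induction with
    | base => exact eqOn_refl _ _
    | succ n hmn ih => exact fun z hz => (hFK n (hK hmn hz)).trans (ih hz)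
  let G : Z → X := fun z => if h : ∃ n, z ∈ K n then F (Nat.find h) z else F 0 z
  have hG : ∀ n, EqOn G (F n) (K n) := fun n z hz => by
    have h : ∃ n, z ∈ K n := ⟨n, hz⟩
    simp only [G, dif_pos h]
    exact (hcompat _ n (Nat.find_min' h hz) (Nat.find_spec h)).symm
  refine ⟨G, continuousOn_of_locally_continuousOn fun z hz => ?_, hG⟩
  obtain ⟨n, hn⟩ := mem_iUnion.1 hz
  exact ⟨interior (K n), isOpen_interior, hn,
    ((hF n).mono fun y hy => interior_subset hy.2).congr fun y hy => hG n (interior_subset hy.2)⟩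

structure PartialExtension {Z : Type*} [TopologicalSpace Z] (A : Set Z) (f : Z → X) where
  core : Set Z
  toFun : Z → X
  isClosed_core : IsClosed core
  exists_nhds : ∃ N, IsOpen N ∧ core ⊆ N ∧ ContinuousOn toFun N ∧ EqOn toFun f (A ∩ N)

section Iteration

variable {ι : Type*} {U : ι → Set X} {Z : Type u} [TopologicalSpace Z] [MetrizableSpace Z]
  {A : Set Z} {f : Z → X}

theorem PartialExtension.exists_extend (hU : ∀ i, IsOpen (U i)) (hANE : ∀ i, IsANE.{u} (U i))
    (hA : IsClosed A) (hf : ContinuousOn f A) (e : PartialExtension A f) {T : ι → Set Z}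
    (hT : ∀ i, IsOpen (T i)) (hTd : Pairwise (Disjoint on T))
    (hfT : ∀ i, MapsTo f (A ∩ T i) (U i)) {C : Set Z} (hC : IsClosed C) (hCA : C ⊆ A)
    (hCT : C ⊆ ⋃ i, T i) :
    ∃ e' : PartialExtension A f, e.core ∪ C ⊆ interior e'.core ∧ EqOn e'.toFun e.toFun e.core := by
  obtain ⟨N, hN, hKN, hF, hFf⟩ := e.exists_nhds
  obtain ⟨N', hN', hKCN', F', hF', hF'f, hF'F⟩ := exists_extension_step hU hANE hA hf hT hTd hfT
    hN hF hFf e.isClosed_core hKN hC hCA hCT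
  obtain ⟨V, hV, hKCV, hVN'⟩ := normal_exists_closure_subset (e.isClosed_core.union hC) hN' hKCN'
  exact ⟨⟨closure V, F', isClosed_closure, N', hN', hVN', hF', hF'f⟩,
    hKCV.trans (hV.subset_interior_iff.2 subset_closure), hF'F⟩

theorem exists_continuousOn_extension_of_closed_cover (hU : ∀ i, IsOpen (U i))
    (hANE : ∀ i, IsANE.{u} (U i)) (hA : IsClosed A) (hf : ContinuousOn f A)
    {C : ℕ → Set Z} {T : ℕ → ι → Set Z} (hC : ∀ n, IsClosed (C n)) (hCA : ∀ n, C n ⊆ A)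
    (hAC : A ⊆ ⋃ n, C n) (hT : ∀ n i, IsOpen (T n i)) (hTd : ∀ n, Pairwise (Disjoint on T n))
    (hCT : ∀ n, C n ⊆ ⋃ i, T n i) (hfT : ∀ n i, MapsTo f (A ∩ T n i) (U i)) :
    ∃ V, IsOpen V ∧ A ⊆ V ∧ ∃ G : Z → X, ContinuousOn G V ∧ EqOn G f A := by
  choose next hnext hnextF using fun n (e : PartialExtension A f) =>
    e.exists_extend hU hANE hA hf (hT n) (hTd n) (hfT n) (hC n) (hCA n) (hCT n)
  let e₀ : PartialExtension A f :=
    ⟨∅, f, isClosed_empty, ∅, isOpen_empty, subset_rfl, continuousOn_empty f, by simp⟩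
  let e : ℕ → PartialExtension A f := fun n => Nat.rec e₀ next n
  have he : ∀ n, (e n).core ∪ C n ⊆ interior (e (n + 1)).core := fun n => hnext n (e n)
  obtain ⟨G, hG, hGe⟩ := exists_continuousOn_iUnion_interior (K := fun n => (e n).core)
    (monotone_nat_of_le_succ fun n => subset_union_left.trans ((he n).trans interior_subset))
    (fun n => by obtain ⟨N, -, hKN, hF, -⟩ := (e n).exists_nhds; exact hF.mono hKN)
    (fun n => hnextF n (e n))
  have hAint : A ⊆ ⋃ n, interior (e (n + 1)).core := fun a ha => by
    obtain ⟨n, hn⟩ := mem_iUnion.1 (hAC ha)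
    exact mem_iUnion.2 ⟨n, he n (Or.inr hn)⟩
  refine ⟨⋃ n, interior (e n).core, isOpen_iUnion fun _ => isOpen_interior,
    hAint.trans (iUnion_subset fun n => subset_iUnion (fun m => interior (e m).core) (n + 1)),
    G, hG, fun a ha => ?_⟩
  obtain ⟨n, hn⟩ := mem_iUnion.1 (hAint ha)
  obtain ⟨N, -, hKN, -, hFf⟩ := (e (n + 1)).exists_nhds
  exact (hGe (n + 1) (interior_subset hn)).trans (hFf ⟨ha, hKN (interior_subset hn)⟩)

end Iteration

/-- Hanner's open union theorem: if a space `X` is the union of a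
family of open subsets each of which is an ANE for metrizable spaces, then `X` is
an ANE for metrizable spaces. -/
theorem stmt15 {X : Type v} [TopologicalSpace X] {ι : Type*} (U : ι → Set X)
    (hopen : ∀ i, IsOpen (U i))
    (hANE : ∀ i, IsANE.{u} (U i))
    (hcover : (⋃ i, U i) = Set.univ) :
    IsANE.{u} X := by
  refine isANE_of_exists_continuousOn_extension fun Z _ _ A hA f hf => ?_
  let := metrizableSpaceMetric Z
  choose V hV hVf using fun i => continuousOn_iff'.1 hf _ (hopen i)
  have hAV : A ⊆ ⋃ i, V i := fun a ha => by
    obtain ⟨i, hi⟩ := mem_iUnion.1 (hcover.symm ▸ mem_univ (f a) : f a ∈ ⋃ i, U i)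
    exact mem_iUnion.2 ⟨i, ((hVf i).subset ⟨hi, ha⟩).1⟩
  obtain ⟨C, T, hC, hCA, hAC, hT, hTV, hTd, hCT⟩ :=
    hA.exists_closed_cover_subordinate_pairwise_disjoint hV hAV
  exact exists_continuousOn_extension_of_closed_cover hopen hANE hA hf hC hCA hAC hT hTd hCT
    fun n i a ha => ((hVf i).symm.subset ⟨hTV n i ha.2, ha.1⟩).1
end
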